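/- arXiv:1207.2413 — 3 statements merged into one kernel-verified Lean document; each statement's English description precedes it below -/
import Mathlib

section
/- Let A, B ∈ ℝ[t, t⁻¹] be palindromic Laurent polynomials that are coprime in ℝ[t, t⁻¹]. If for every z on the unit circle at least one of A(z), B(z) is strictly positive, then there exist palindromic P, Q ∈ ℝ[t, t⁻¹] with P·A + Q·B = 1 and such that P(z) > 0 and Q(z) > 0 for every z on the unit circle. -/
/-! On the unit circle palindromic Laurent polynomials are real and depend only on `x = Re z`,
so the problem becomes one about continuous functions `a, b, p, q` on `[-1, 1]` with
`p a + q b = 1`, where `p, q` come from any palindromic Bézout pair. The admissible corrections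
`c` with `p + c b > 0` and `q - c a > 0` form at each `x` a nonempty open interval, so a
partition of unity yields a continuous admissible `c`, and by Weierstrass a polynomial `r` is
admissible too. Since `(t + t⁻¹) / 2` equals `Re z` on the circle, `R = r((t + t⁻¹) / 2)` is a
palindromic Laurent polynomial, and `P = P₀ + R B`, `Q = Q₀ - R A` do the job. -/

open LaurentPolynomial

noncomputable def lEval (p : LaurentPolynomial ℝ) (z : ℂ) : ℂ :=
  Finsupp.sum (AddMonoidAlgebra.coeff p) fun n a => (a : ℂ) * z ^ n

def Palindromic (p : LaurentPolynomial ℝ) : Prop := invert p = p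

open Set ComplexConjugate
open scoped Polynomial

def positiveShifts (a b p q : ℝ) : Set ℝ := {c | 0 < p + c * b ∧ 0 < q - c * a}

lemma convex_positiveShifts (a b p q : ℝ) : Convex ℝ (positiveShifts a b p q) := by
  rintro c ⟨hcb, hca⟩ d ⟨hdb, hda⟩ s t hs ht hst
  obtain rfl : t = 1 - s := by linarith
  simp only [positiveShifts, smul_eq_mul, mem_ofPred_eq]
  constructor
  · nlinarith [mul_nonneg hs hcb.le, mul_nonneg ht hdb.le]
  · nlinarith [mul_nonneg hs hca.le, mul_nonneg ht hda.le]

lemma positiveShifts_nonempty {a b p q : ℝ} (hbez : p * a + q * b = 1) (hpos : 0 < a ∨ 0 < b) :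
    (positiveShifts a b p q).Nonempty := by
  rcases lt_or_ge 0 a with ha | ha <;> rcases lt_or_ge 0 b with hb | hb
  · refine ⟨(q / a - p / b) / 2, ?_, ?_⟩ <;> field_simp <;> nlinarith
  · refine ⟨q / a - 1, ?_, ?_⟩ <;> field_simp <;> nlinarith
  · refine ⟨1 - p / b, ?_, ?_⟩ <;> field_simp <;> nlinarith
  · exact absurd hpos (by push Not; exact ⟨ha, hb⟩)

section ContinuousShift

variable {X : Type*} [TopologicalSpace X]

lemma isOpen_setOf_forall_pos [CompactSpace X] : IsOpen {g : C(X, ℝ) | ∀ x, 0 < g x} := by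
  simpa [MapsTo] using ContinuousMap.isOpen_setOfPred_mapsTo (X := X) isCompact_univ isOpen_Ioi

lemma isOpen_setOf_forall_mem_positiveShifts [CompactSpace X] (a b p q : C(X, ℝ)) :
    IsOpen {f : C(X, ℝ) | ∀ x, f x ∈ positiveShifts (a x) (b x) (p x) (q x)} := by
  have hcont₁ : Continuous fun f : C(X, ℝ) => p + f * b := by fun_prop
  have hcont₂ : Continuous fun f : C(X, ℝ) => q - f * a := by fun_prop
  convert (isOpen_setOf_forall_pos.preimage hcont₁).inter (isOpen_setOf_forall_pos.preimage hcont₂)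
  ext f
  simp [positiveShifts, forall_and]

lemma exists_continuous_forall_mem_positiveShifts [NormalSpace X] [ParacompactSpace X]
    (a b p q : C(X, ℝ)) (hbez : ∀ x, p x * a x + q x * b x = 1) (hpos : ∀ x, 0 < a x ∨ 0 < b x) :
    ∃ f : C(X, ℝ), ∀ x, f x ∈ positiveShifts (a x) (b x) (p x) (q x) := by
  refine exists_continuous_forall_mem_convex_of_local_const
    (fun x => convex_positiveShifts _ _ _ _) fun x => ?_
  obtain ⟨c, hc⟩ := positiveShifts_nonempty (hbez x) (hpos x)
  have hopen : IsOpen {y | c ∈ positiveShifts (a y) (b y) (p y) (q y)} :=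
    (isOpen_lt continuous_const (by fun_prop : Continuous fun y => p y + c * b y)).inter
      (isOpen_lt continuous_const (by fun_prop : Continuous fun y => q y - c * a y))
  exact ⟨c, hopen.mem_nhds hc⟩

end ContinuousShift

lemma exists_polynomial_forall_mem_positiveShifts {s t : ℝ} (a b p q : C(Icc s t, ℝ))
    (hbez : ∀ x, p x * a x + q x * b x = 1) (hpos : ∀ x, 0 < a x ∨ 0 < b x) :
    ∃ r : ℝ[X], ∀ x : Icc s t, r.eval (x : ℝ) ∈ positiveShifts (a x) (b x) (p x) (q x) := by
  obtain ⟨f, hf⟩ := exists_continuous_forall_mem_positiveShifts a b p q hbez hpos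
  obtain ⟨-, hr, r, -, rfl⟩ :=
    mem_closure_iff.mp (continuousMap_mem_polynomialFunctions_closure s t f) _
      (isOpen_setOf_forall_mem_positiveShifts a b p q) hf
  exact ⟨r, hr⟩

lemma ne_zero_of_norm_eq_one {z : ℂ} (hz : ‖z‖ = 1) : z ≠ 0 := by
  rintro rfl
  simp at hz

lemma re_mem_Icc_of_norm_eq_one {z : ℂ} (hz : ‖z‖ = 1) : z.re ∈ Icc (-1 : ℝ) 1 :=
  abs_le.mp (hz ▸ Complex.abs_re_le_norm z)

lemma eq_or_eq_conj_of_re_eq {z w : ℂ} (hz : ‖z‖ = 1) (hw : ‖w‖ = 1) (h : w.re = z.re) :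
    w = z ∨ w = conj z := by
  have hz' := Complex.sq_norm z
  have hw' := Complex.sq_norm w
  rw [hz, Complex.normSq_apply] at hz'
  rw [hw, Complex.normSq_apply] at hw'
  have him : w.im ^ 2 = z.im ^ 2 := by linear_combination hz' - hw' - (z.re + w.re) * h
  rcases sq_eq_sq_iff_eq_or_eq_neg.mp him with him | him
  · exact Or.inl (Complex.ext h him)
  · exact Or.inr (Complex.ext h him)

noncomputable def upperCirclePoint (x : Icc (-1 : ℝ) 1) : ℂ := ⟨x, √(1 - (x : ℝ) ^ 2)⟩

lemma norm_upperCirclePoint (x : Icc (-1 : ℝ) 1) : ‖upperCirclePoint x‖ = 1 := by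
  have h : 0 ≤ 1 - (x : ℝ) ^ 2 := by nlinarith [x.2.1, x.2.2]
  simp [upperCirclePoint, Complex.norm_def, Complex.normSq_apply, ← sq, Real.sq_sqrt h]

lemma continuous_upperCirclePoint : Continuous upperCirclePoint :=
  Complex.equivRealProdCLM.symm.continuous.comp
    (by fun_prop : Continuous fun x : Icc (-1 : ℝ) 1 => ((x : ℝ), √(1 - (x : ℝ) ^ 2)))

lemma lEval_eq_eval₂ (p : LaurentPolynomial ℝ) {z : ℂ} (hz : z ≠ 0) :
    lEval p z = eval₂ (algebraMap ℝ ℂ) (Units.mk0 z hz) p := by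
  induction p using LaurentPolynomial.induction_on' with
  | add p q hp hq =>
    rw [map_add, ← hp, ← hq, lEval, AddMonoidAlgebra.coeff_add]
    exact Finsupp.sum_add_index' (by simp) fun n r s => by push_cast; ring
  | C_mul_T n r =>
    rw [eval₂_C_mul_T, ← single_eq_C_mul_T, lEval, AddMonoidAlgebra.coeff_single,
      Finsupp.sum_single_index (by simp)]
    simp only [Complex.coe_algebraMap, Units.val_zpow_eq_zpow_val, Units.val_mk0]

section Evaluation

variable (p q : LaurentPolynomial ℝ) {z : ℂ}

lemma lEval_add (hz : z ≠ 0) : lEval (p + q) z = lEval p z + lEval q z := by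
  simp only [lEval_eq_eval₂ _ hz, map_add]

lemma lEval_sub (hz : z ≠ 0) : lEval (p - q) z = lEval p z - lEval q z := by
  simp only [lEval_eq_eval₂ _ hz, map_sub]

lemma lEval_mul (hz : z ≠ 0) : lEval (p * q) z = lEval p z * lEval q z := by
  simp only [lEval_eq_eval₂ _ hz, map_mul]

lemma lEval_one (hz : z ≠ 0) : lEval 1 z = 1 := by
  simp only [lEval_eq_eval₂ _ hz, map_one]

lemma lEval_invert (hz : z ≠ 0) : lEval (invert p) z = lEval p z⁻¹ := by
  rw [lEval_eq_eval₂ _ hz, lEval_eq_eval₂ _ (inv_ne_zero hz)]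
  induction p using LaurentPolynomial.induction_on' with
  | add p q hp hq => rw [map_add, map_add, map_add, hp, hq]
  | C_mul_T n r => simp [zpow_neg]

lemma lEval_conj (z : ℂ) : lEval p (conj z) = conj (lEval p z) := by
  simp only [lEval, Finsupp.sum, map_sum, map_mul, Complex.conj_ofReal, map_zpow₀]

lemma re_lEval_eq_of_re_eq {w : ℂ} (hz : ‖z‖ = 1) (hw : ‖w‖ = 1) (h : w.re = z.re) :
    (lEval p w).re = (lEval p z).re := by
  rcases eq_or_eq_conj_of_re_eq hz hw h with rfl | rfl
  · rfl
  · rw [lEval_conj, Complex.conj_re]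

end Evaluation

lemma Palindromic.lEval_eq_ofReal_re {p : LaurentPolynomial ℝ} (hp : Palindromic p) {z : ℂ}
    (hz : ‖z‖ = 1) : lEval p z = (lEval p z).re := by
  refine (Complex.conj_eq_iff_re.mp ?_).symm
  rw [← lEval_conj, ← Complex.inv_eq_conj hz, ← lEval_invert p (ne_zero_of_norm_eq_one hz), hp]

lemma re_lEval_bezout {P Q A B : LaurentPolynomial ℝ} (hP : Palindromic P) (hQ : Palindromic Q)
    (hA : Palindromic A) (hB : Palindromic B) (h : P * A + Q * B = 1) {z : ℂ} (hz : ‖z‖ = 1) :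
    (lEval P z).re * (lEval A z).re + (lEval Q z).re * (lEval B z).re = 1 := by
  have hz₀ := ne_zero_of_norm_eq_one hz
  have h' := congrArg (lEval · z) h
  simp only [lEval_add _ _ hz₀, lEval_mul _ _ hz₀, lEval_one hz₀] at h'
  rw [hP.lEval_eq_ofReal_re hz, hQ.lEval_eq_ofReal_re hz, hA.lEval_eq_ofReal_re hz,
    hB.lEval_eq_ofReal_re hz] at h'
  exact_mod_cast h'

noncomputable def circleProfile (p : LaurentPolynomial ℝ) : C(Icc (-1 : ℝ) 1, ℝ) where
  toFun x := (lEval p (upperCirclePoint x)).re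
  continuous_toFun := by
    refine Complex.continuous_re.comp (continuous_finsetSum _ fun n _ => ?_)
    exact continuous_const.mul (continuous_upperCirclePoint.zpow₀ n fun x =>
      Or.inl (ne_zero_of_norm_eq_one (norm_upperCirclePoint x)))

lemma circleProfile_re (p : LaurentPolynomial ℝ) {z : ℂ} (hz : ‖z‖ = 1) :
    circleProfile p ⟨z.re, re_mem_Icc_of_norm_eq_one hz⟩ = (lEval p z).re :=
  re_lEval_eq_of_re_eq p hz (norm_upperCirclePoint _) rfl

namespace Palindromic

variable {p q : LaurentPolynomial ℝ}

lemma add (hp : Palindromic p) (hq : Palindromic q) : Palindromic (p + q) := by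
  rw [Palindromic, map_add, hp, hq]

lemma sub (hp : Palindromic p) (hq : Palindromic q) : Palindromic (p - q) := by
  rw [Palindromic, map_sub, hp, hq]

lemma mul (hp : Palindromic p) (hq : Palindromic q) : Palindromic (p * q) := by
  rw [Palindromic, map_mul, hp, hq]

end Palindromic

lemma palindromic_add_invert (p : LaurentPolynomial ℝ) : Palindromic (p + invert p) := by
  rw [Palindromic, map_add, involutive_invert p, add_comm]

lemma palindromic_C (r : ℝ) : Palindromic (C r) :=
  invert_C r

lemma IsCoprime.exists_palindromic_bezout {A B : LaurentPolynomial ℝ} (hA : Palindromic A)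
    (hB : Palindromic B) (h : IsCoprime A B) :
    ∃ P Q : LaurentPolynomial ℝ, Palindromic P ∧ Palindromic Q ∧ P * A + Q * B = 1 := by
  obtain ⟨P, Q, hPQ⟩ := h
  have hinv : invert P * A + invert Q * B = 1 := by
    have h := congrArg invert hPQ
    rwa [map_add, map_mul, map_mul, hA, hB, map_one] at h
  refine ⟨C 2⁻¹ * (P + invert P), C 2⁻¹ * (Q + invert Q),
    (palindromic_C _).mul (palindromic_add_invert P),
    (palindromic_C _).mul (palindromic_add_invert Q), ?_⟩
  have hC : C (2⁻¹ : ℝ) * 2 = 1 := by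
    rw [← map_ofNat C 2, ← map_mul, inv_mul_cancel₀ two_ne_zero, map_one]
  linear_combination C (2⁻¹ : ℝ) * (hPQ + hinv) + hC

noncomputable def circleRe : LaurentPolynomial ℝ := C 2⁻¹ * (T 1 + T (-1))

lemma palindromic_circleRe : Palindromic circleRe := by
  rw [circleRe, Palindromic, map_mul, map_add, invert_C, invert_T, invert_T, neg_neg, add_comm]

lemma lEval_circleRe {z : ℂ} (hz : ‖z‖ = 1) : lEval circleRe z = z.re := by
  have hz₀ := ne_zero_of_norm_eq_one hz
  rw [lEval_eq_eval₂ _ hz₀, circleRe, map_mul, map_add, eval₂_C, eval₂_T, eval₂_T]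
  simp only [zpow_one, zpow_neg, Units.val_inv_eq_inv_val, Units.val_mk0, Complex.inv_eq_conj hz,
    Complex.add_conj]
  push_cast
  ring

lemma palindromic_aeval_circleRe (r : ℝ[X]) : Palindromic (Polynomial.aeval circleRe r) := by
  rw [Palindromic, ← Polynomial.aeval_algHom_apply, palindromic_circleRe]

lemma lEval_aeval_circleRe (r : ℝ[X]) {z : ℂ} (hz : ‖z‖ = 1) :
    lEval (Polynomial.aeval circleRe r) z = r.eval z.re := by
  have hz₀ := ne_zero_of_norm_eq_one hz
  have hcomp :
      (eval₂ (algebraMap ℝ ℂ) (Units.mk0 z hz₀)).comp (algebraMap ℝ _) = algebraMap ℝ ℂ :=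
    RingHom.ext fun r => by simp
  rw [lEval_eq_eval₂ _ hz₀, Polynomial.aeval_def, Polynomial.hom_eval₂, ← lEval_eq_eval₂ _ hz₀,
    lEval_circleRe hz, hcomp]
  exact Polynomial.eval₂_at_apply (algebraMap ℝ ℂ) z.re

lemma exists_palindromic_lEval_eq_eval_re (r : ℝ[X]) :
    ∃ R : LaurentPolynomial ℝ, Palindromic R ∧ ∀ z : ℂ, ‖z‖ = 1 → lEval R z = r.eval z.re :=
  ⟨_, palindromic_aeval_circleRe r, fun _ => lEval_aeval_circleRe r⟩

/-- For coprime palindromic `A`, `B` with at least one of `A(z)`, `B(z)` positive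
at each point of the unit circle, there are palindromic `P`, `Q`, positive on the
unit circle, with `PA + QB = 1`. -/
theorem exists_positive_palindromic_bezout
    (A B : LaurentPolynomial ℝ) (hA : Palindromic A) (hB : Palindromic B)
    (hcop : IsCoprime A B)
    (hpos : ∀ z : ℂ, ‖z‖ = 1 → 0 < (lEval A z).re ∨ 0 < (lEval B z).re) :
    ∃ P Q : LaurentPolynomial ℝ, Palindromic P ∧ Palindromic Q ∧
      P * A + Q * B = 1 ∧
      ∀ z : ℂ, ‖z‖ = 1 → 0 < (lEval P z).re ∧ 0 < (lEval Q z).re := by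
  obtain ⟨P₀, Q₀, hP₀, hQ₀, hbez₀⟩ := hcop.exists_palindromic_bezout hA hB
  obtain ⟨r, hr⟩ := exists_polynomial_forall_mem_positiveShifts (circleProfile A)
    (circleProfile B) (circleProfile P₀) (circleProfile Q₀)
    (fun x => re_lEval_bezout hP₀ hQ₀ hA hB hbez₀ (norm_upperCirclePoint x))
    (fun x => hpos _ (norm_upperCirclePoint x))
  obtain ⟨R, hR, hRz⟩ := exists_palindromic_lEval_eq_eval_re r
  refine ⟨P₀ + R * B, Q₀ - R * A, hP₀.add (hR.mul hB), hQ₀.sub (hR.mul hA),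
    by linear_combination hbez₀, fun z hz => ?_⟩
  have hz₀ := ne_zero_of_norm_eq_one hz
  obtain ⟨hP, hQ⟩ := hr ⟨z.re, re_mem_Icc_of_norm_eq_one hz⟩
  simp only [circleProfile_re _ hz] at hP hQ
  simp only [lEval_add _ _ hz₀, lEval_sub _ _ hz₀, lEval_mul _ _ hz₀, hRz z hz,
    Complex.add_re, Complex.sub_re, Complex.re_ofReal_mul]
  exact ⟨hP, hQ⟩
end

section
/- Let f₁, f₂ : S¹ → [−π/2, π/2] be continuous functions with f₁(z) < f₂(z) for all z, both symmetric (fᵢ(z̄) = fᵢ(z)). Then there exists a palindromic Laurent polynomial γ ∈ ℝ[t,t⁻¹] with tan(f₁(z)) < γ(z) < tan(f₂(z)) for all z ∈ S¹ at which both f₁(z) > −π/2 and f₂(z) < π/2, and more generally arctan applied to the sandwich holds: f₁(z) < arctan(γ(z)) < f₂(z) for all z ∈ S¹. -/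
/-!
The midpoint `m = (f₁ + f₂) / 2` takes values in `(-π/2, π/2)`, so `tan ∘ m` is a continuous
symmetric function on the circle. A symmetric function on the circle depends only on
`Re z ∈ [-1, 1]`, so by Weierstrass it is uniformly close to `z ↦ q (Re z)` for a real polynomial
`q`; on the circle `Re z` is the palindromic Laurent polynomial `(t + t⁻¹) / 2`, hence so is
`γ = q ((t + t⁻¹) / 2)`. As `arctan` is 1-Lipschitz, approximating within half of `min (f₂ - f₁)`
puts `arctan γ` strictly between `f₁` and `f₂`.
-/

open LaurentPolynomial Real

noncomputable def sphereConj (z : Metric.sphere (0 : ℂ) 1) : Metric.sphere (0 : ℂ) 1 :=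
  ⟨starRingEnd ℂ z, by
    have := z.2
    simp only [mem_sphere_zero_iff_norm] at this ⊢
    simp [this]⟩

noncomputable def lEvalAlgHom (z : ℂ) (hz : z ≠ 0) : LaurentPolynomial ℝ →ₐ[ℝ] ℂ :=
  AddMonoidAlgebra.lift ℝ ℂ ℤ ((Units.coeHom ℂ).comp (zpowersHom ℂˣ (Units.mk0 z hz)))

theorem lEvalAlgHom_apply (z : ℂ) (hz : z ≠ 0) (p : LaurentPolynomial ℝ) :
    lEvalAlgHom z hz p = lEval p z := by
  rw [lEvalAlgHom, AddMonoidAlgebra.lift_apply, lEval]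
  refine Finsupp.sum_congr fun n _ => ?_
  simp [Algebra.smul_def, Units.val_zpow_eq_zpow_val]

theorem lEval_T (n : ℤ) (z : ℂ) : lEval (T n) z = z ^ n := by
  rw [lEval, show AddMonoidAlgebra.coeff (T n : LaurentPolynomial ℝ) = Finsupp.single n 1 from rfl,
    Finsupp.sum_single_index] <;> simp

theorem lEval_aeval {z : ℂ} (hz : z ≠ 0) (w : LaurentPolynomial ℝ) (q : Polynomial ℝ) :
    lEval (Polynomial.aeval w q) z = Polynomial.aeval (lEval w z) q := by
  rw [← lEvalAlgHom_apply z hz, ← Polynomial.aeval_algHom_apply, lEvalAlgHom_apply]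

theorem Palindromic.aeval {w : LaurentPolynomial ℝ} (hw : Palindromic w) (q : Polynomial ℝ) :
    Palindromic (Polynomial.aeval w q) := by
  rw [Palindromic, ← Polynomial.aeval_algHom_apply (invert : LaurentPolynomial ℝ ≃ₐ[ℝ] _), hw]

noncomputable def joukowski : LaurentPolynomial ℝ := C 2⁻¹ * (T 1 + T (-1))

theorem palindromic_joukowski : Palindromic joukowski := by
  simp only [Palindromic, joukowski, map_mul, map_add, invert_T, invert_C, neg_neg, add_comm]

theorem lEval_joukowski {z : ℂ} (hz : ‖z‖ = 1) : lEval joukowski z = z.re := by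
  have hz0 : z ≠ 0 := norm_ne_zero_iff.1 (by simp [hz])
  have hinv : z⁻¹ = starRingEnd ℂ z := by
    rw [Complex.inv_def, Complex.normSq_eq_norm_sq, hz]
    simp
  rw [← lEvalAlgHom_apply z hz0, joukowski, C_eq_algebraMap, map_mul, map_add, AlgHom.commutes,
    lEvalAlgHom_apply, lEvalAlgHom_apply, lEval_T, lEval_T, zpow_one, zpow_neg_one, hinv,
    Complex.add_conj]
  push_cast
  ring

theorem lEval_aeval_joukowski {z : ℂ} (hz : ‖z‖ = 1) (q : Polynomial ℝ) :
    lEval (Polynomial.aeval joukowski q) z = q.eval z.re := by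
  rw [lEval_aeval (norm_ne_zero_iff.1 (by simp [hz])), lEval_joukowski hz]
  exact Polynomial.aeval_ofReal q z.re

noncomputable def sphereRe (z : Metric.sphere (0 : ℂ) 1) : Set.Icc (-1 : ℝ) 1 :=
  ⟨(z : ℂ).re, abs_le.1 <| (Complex.abs_re_le_norm (z : ℂ)).trans_eq (norm_eq_of_mem_sphere z)⟩

noncomputable def upperArc (x : Set.Icc (-1 : ℝ) 1) : Metric.sphere (0 : ℂ) 1 :=
  ⟨(x : ℂ) + √(1 - (x : ℝ) ^ 2) * Complex.I, by
    have hx : (x : ℝ) ^ 2 ≤ 1 := by nlinarith [x.2.1, x.2.2]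
    rw [mem_sphere_zero_iff_norm, Complex.norm_def, Complex.normSq_add_mul_I,
      Real.sq_sqrt (by linarith), add_sub_cancel, Real.sqrt_one]⟩

theorem continuous_upperArc : Continuous upperArc := by
  unfold upperArc
  fun_prop

theorem upperArc_sphereRe_eq_or_sphereConj (z : Metric.sphere (0 : ℂ) 1) :
    upperArc (sphereRe z) = z ∨ sphereConj (upperArc (sphereRe z)) = z := by
  have hsqrt : √(1 - (z : ℂ).re ^ 2) = |(z : ℂ).im| := by
    have h := Complex.normSq_eq_norm_sq (z : ℂ)
    rw [norm_eq_of_mem_sphere z, Complex.normSq_apply] at h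
    rw [show 1 - (z : ℂ).re ^ 2 = (z : ℂ).im ^ 2 by linarith, Real.sqrt_sq_eq_abs]
  rcases le_or_gt 0 (z : ℂ).im with him | him
  · left
    ext1
    apply Complex.ext <;> simp [upperArc, sphereRe, hsqrt, abs_of_nonneg him]
  · right
    ext1
    apply Complex.ext <;> simp [upperArc, sphereRe, sphereConj, hsqrt, abs_of_neg him]

theorem apply_upperArc_sphereRe {α : Type*} {f : Metric.sphere (0 : ℂ) 1 → α}
    (hf : ∀ z, f (sphereConj z) = f z) (z : Metric.sphere (0 : ℂ) 1) :
    f (upperArc (sphereRe z)) = f z := by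
  rcases upperArc_sphereRe_eq_or_sphereConj z with h | h
  · rw [h]
  · exact (hf _).symm.trans (congrArg f h)

theorem exists_palindromic_near (g : C(Metric.sphere (0 : ℂ) 1, ℝ))
    (hg : ∀ z, g (sphereConj z) = g z) {ε : ℝ} (hε : 0 < ε) :
    ∃ γ : LaurentPolynomial ℝ, Palindromic γ ∧
      ∀ z : Metric.sphere (0 : ℂ) 1, |(lEval γ z).re - g z| < ε := by
  obtain ⟨q, hq⟩ :=
    exists_polynomial_near_continuousMap (-1) 1 (g.comp ⟨upperArc, continuous_upperArc⟩) ε hε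
  refine ⟨Polynomial.aeval joukowski q, palindromic_joukowski.aeval q, fun z => ?_⟩
  have hz := (ContinuousMap.norm_lt_iff _ hε).1 hq (sphereRe z)
  rw [lEval_aeval_joukowski (norm_eq_of_mem_sphere z), Complex.ofReal_re,
    ← apply_upperArc_sphereRe hg]
  simpa [sphereRe] using hz

theorem lipschitzWith_arctan : LipschitzWith 1 arctan :=
  lipschitzWith_of_nnnorm_deriv_le differentiable_arctan fun x => by
    rw [← NNReal.coe_le_coe, coe_nnnorm, Real.deriv_arctan, Real.norm_eq_abs,
      abs_of_pos (by positivity), NNReal.coe_one]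
    exact div_le_one_of_le₀ (le_add_of_nonneg_right (sq_nonneg x)) (by positivity)

theorem abs_arctan_sub_lt {x θ ε : ℝ} (hθ : θ ∈ Set.Ioo (-(π / 2)) (π / 2))
    (h : |x - tan θ| < ε) : |arctan x - θ| < ε := by
  have hle := lipschitzWith_arctan.dist_le_mul x (tan θ)
  rw [arctan_tan hθ.1 hθ.2, Real.dist_eq, Real.dist_eq, NNReal.coe_one, one_mul] at hle
  exact hle.trans_lt h

theorem tan_lt_of_lt_arctan {θ x : ℝ} (hθ : -(π / 2) < θ) (h : θ < arctan x) : tan θ < x := by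
  simpa only [tan_arctan] using
    tan_lt_tan_of_lt_of_lt_pi_div_two hθ (arctan_lt_pi_div_two x) h

theorem lt_tan_of_arctan_lt {θ x : ℝ} (hθ : θ < π / 2) (h : arctan x < θ) : x < tan θ := by
  simpa only [tan_arctan] using
    tan_lt_tan_of_lt_of_lt_pi_div_two (neg_pi_div_two_lt_arctan x) hθ h

/-- Given continuous symmetric functions `f₁ < f₂` on the unit circle with values
in `[-π/2, π/2]`, there is a palindromic real Laurent polynomial `γ` with
`f₁(z) < arctan(γ(z)) < f₂(z)` everywhere, and in particular
`tan(f₁(z)) < γ(z) < tan(f₂(z))` wherever `f₁(z) > -π/2` and `f₂(z) < π/2`. -/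
theorem exists_palindromic_between
    (f₁ f₂ : C(Metric.sphere (0 : ℂ) 1, ℝ))
    (hrange : ∀ z, f₁ z ∈ Set.Icc (-(π / 2)) (π / 2) ∧ f₂ z ∈ Set.Icc (-(π / 2)) (π / 2))
    (hlt : ∀ z, f₁ z < f₂ z)
    (hsym₁ : ∀ z, f₁ (sphereConj z) = f₁ z)
    (hsym₂ : ∀ z, f₂ (sphereConj z) = f₂ z) :
    ∃ γ : LaurentPolynomial ℝ, Palindromic γ ∧
      (∀ z : Metric.sphere (0 : ℂ) 1,
        f₁ z < Real.arctan ((lEval γ z).re) ∧ Real.arctan ((lEval γ z).re) < f₂ z) ∧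
      (∀ z : Metric.sphere (0 : ℂ) 1, -(π / 2) < f₁ z → f₂ z < π / 2 →
        Real.tan (f₁ z) < (lEval γ z).re ∧ (lEval γ z).re < Real.tan (f₂ z)) := by
  obtain ⟨δ, hδ, hgap⟩ := isCompact_univ.exists_forall_le' (f₂ - f₁).continuous.continuousOn
    (a := 0) fun z _ => sub_pos.2 (hlt z)
  have hmid (z) : (f₁ z + f₂ z) / 2 ∈ Set.Ioo (-(π / 2)) (π / 2) := by
    obtain ⟨⟨h₁, -⟩, -, h₂⟩ := hrange z
    constructor <;> linarith [hlt z]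
  let g : C(Metric.sphere (0 : ℂ) 1, ℝ) :=
    ⟨fun z => tan ((f₁ z + f₂ z) / 2), continuousOn_tan.comp_continuous (by fun_prop)
      fun z => (cos_pos_of_mem_Ioo (hmid z)).ne'⟩
  obtain ⟨γ, hγ, hnear⟩ :=
    exists_palindromic_near g (fun z => by simp [g, hsym₁, hsym₂]) (half_pos hδ)
  have hbetween (z) : f₁ z < arctan (lEval γ z).re ∧ arctan (lEval γ z).re < f₂ z := by
    have hz := abs_lt.1 (abs_arctan_sub_lt (hmid z) (hnear z))
    have hgap_z : δ ≤ f₂ z - f₁ z := hgap z (Set.mem_univ z)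
    constructor <;> linarith [hz.1, hz.2]
  exact ⟨γ, hγ, hbetween, fun z h₁ h₂ =>
    ⟨tan_lt_of_lt_arctan h₁ (hbetween z).1, lt_tan_of_arctan_lt h₂ (hbetween z).2⟩⟩
end

section
/- Let R be a principal ideal domain, p ∈ R an irreducible element, and H a finitely generated p-primary R-module (every element is annihilated by some power of p). Let l(H) = max over h ∈ H of the minimal k with p^k h = 0, and let s(H) be the minimal number of generators of H. If v ∈ H satisfies l(v) = l(H), then there is a direct sum decomposition H = H' ⊕ (R·v), where R·v ≅ R/p^{l(v)}R and s(H') = s(H) − 1. -/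
/-- The minimal number of generators of a submodule. -/
noncomputable def minGen {R M : Type*} [CommRing R] [AddCommGroup M] [Module R M]
    (N : Submodule R M) : ℕ :=
  sInf {n | ∃ s : Finset M, s.card = n ∧ Submodule.span R (s : Set M) = N}

/-- The `p`-length of an element: the least `k` with `p^k • h = 0`. -/
noncomputable def pLen {R M : Type*} [CommRing R] [AddCommGroup M] [Module R M]
    (p : R) (h : M) : ℕ :=
  sInf {k | p ^ k • h = 0}

open Submodule Module
open scoped DirectSum

universe u v

theorem aux_section {R : Type u} [CommRing R] [IsDomain R] [IsPrincipalIdealRing R]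
    {M : Type v} [AddCommGroup M] [Module R M] [Module.Finite R M]
    (p : R) (hp : Irreducible p) (hM : Module.IsTorsion' M (Submonoid.powers p))
    (v : M) (hann : ∀ x : M, p ^ pLen p v • x = 0) :
    ∃ s : (M ⧸ Submodule.span R {v}) →ₗ[R] M,
      (Submodule.span R {v}).mkQ ∘ₗ s = LinearMap.id := by
  classical
  have hord : Submodule.pOrder hM v = pLen p v :=
    le_antisymm (Nat.find_le (hann v)) (Nat.sInf_le (Submodule.pow_pOrder_smul hM v))
  have hj : Module.IsTorsionBy R M (p ^ Submodule.pOrder hM v) := fun x => by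
    rw [hord]; exact hann x
  set Q := M ⧸ Submodule.span R {v} with hQ
  haveI : Module.Finite R (ULift.{u} Q) := Module.Finite.equiv ULift.moduleEquiv.symm
  have hQtor : Module.IsTorsion' (ULift.{u} Q) (Submonoid.powers p) := by
    intro x
    refine ⟨⟨p ^ pLen p v, ⟨_, rfl⟩⟩, ?_⟩
    obtain ⟨y, hy⟩ := (Submodule.span R {v}).mkQ_surjective x.down
    have : p ^ pLen p v • x.down = 0 := by
      rw [← hy]
      show ((Submodule.Quotient.mk (p ^ pLen p v • y) : Q)) = 0
      rw [hann, Submodule.Quotient.mk_zero]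
    apply ULift.ext
    exact this
  obtain ⟨d, k, ⟨f⟩⟩ := Module.torsion_by_prime_power_decomposition hp hQtor
  let g : Q ≃ₗ[R] ⨁ i : Fin d, R ⧸ R ∙ p ^ k i := ULift.moduleEquiv.symm.trans f
  have key : ∀ i : Fin d, ∃ x : M, p ^ k i • x = 0 ∧
      Submodule.Quotient.mk (p := Submodule.span R {v}) x
        = g.symm.toLinearMap.comp (DirectSum.lof R (Fin d) _ i) 1 := fun i =>
    Module.exists_smul_eq_zero_and_mk_eq hp hM hj _
  choose x hx0 hx1 using key
  let T : (⨁ i : Fin d, R ⧸ R ∙ p ^ k i) →ₗ[R] M :=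
    DirectSum.toModule R (Fin d) M fun i =>
      Submodule.liftQSpanSingleton (p ^ k i) (LinearMap.toSpanSingleton R M (x i))
        (by simpa using hx0 i)
  refine ⟨T ∘ₗ g.toLinearMap, ?_⟩
  have hTg : (Submodule.span R {v}).mkQ ∘ₗ T = g.symm.toLinearMap := by
    ext i : 3
    simp only [LinearMap.coe_comp, Function.comp_apply, DirectSum.toModule_lof,
      Submodule.liftQSpanSingleton_apply, LinearMap.toSpanSingleton_apply, Submodule.mkQ_apply,
      one_smul, T]
    exact hx1 i
  rw [← LinearMap.comp_assoc, hTg]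
  ext q
  simp [g]

theorem aux_nakayama {R : Type*} [CommRing R]
    {M : Type*} [AddCommGroup M] [Module R M]
    (p : R) (m : ℕ) (hann : ∀ x : M, p ^ m • x = 0)
    (N : Submodule R M) (S : Set M)
    (hSN : Submodule.span R S ≤ N)
    (h : N ≤ Submodule.span R S ⊔ Ideal.span {p} • N) :
    Submodule.span R S = N := by
  set I : Ideal R := Ideal.span {p} with hI
  have key : ∀ j : ℕ, N ≤ Submodule.span R S ⊔ I ^ j • N := by
    intro j; induction j with
    | zero => rw [pow_zero, Ideal.one_eq_top, Submodule.top_smul]; exact le_sup_right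
    | succ j ih =>
      refine h.trans ?_
      have : I • N ≤ I • (Submodule.span R S ⊔ I ^ j • N) := smul_mono_right I ih
      refine (sup_le_sup_left this _).trans ?_
      rw [Submodule.smul_sup]
      refine sup_le le_sup_left (sup_le ?_ ?_)
      · exact le_sup_left.trans' (Submodule.smul_le_right)
      · rw [smul_smul, ← pow_succ']
        exact le_sup_right
  have hbot : I ^ m • N ≤ ⊥ := by
    rw [hI, Ideal.span_singleton_pow]
    refine Submodule.smul_le.2 fun r hr n hn => ?_
    obtain ⟨c, rfl⟩ := Ideal.mem_span_singleton'.mp hr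
    rw [mul_smul, hann, smul_zero]
    exact Submodule.zero_mem ⊥
  refine le_antisymm hSN ?_
  refine (key m).trans ?_
  rw [le_bot_iff.mp hbot, sup_bot_eq]

open Pointwise in
theorem aux_mem_psmul {R M : Type*} [CommRing R] [AddCommGroup M] [Module R M]
    {a : R} {S : Submodule R M} {x : M} (h : x ∈ a • S) : ∃ y ∈ S, a • y = x := by
  have h2 : x ∈ (a • (S : Set M)) := by rwa [← Submodule.coe_pointwise_smul]
  exact Set.mem_smul_set.mp h2

/-- Abstract counting lemma. -/
theorem aux_count {R : Type*} [CommRing R] [IsNoetherianRing R] {H : Type*} [AddCommGroup H] [Module R H]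
    [Module.Finite R H]
    {K : Type*} [Field K] {W : Type*} [AddCommGroup W] [Module R W] [Module K W]
    (σ : R →+* K) (hσ : Function.Surjective σ)
    (hsmul : ∀ (r : R) (w : W), σ r • w = r • w)
    (p : R) (m : ℕ) (hm : 0 < m) (hann : ∀ x : H, p ^ m • x = 0)
    (v : H) (hpv : p ^ (m - 1) • v ≠ 0)
    (π : H →ₗ[R] W)
    (hker : ∀ x : H, π x = 0 ↔ x ∈ ((Ideal.span {p} : Ideal R) • (⊤ : Submodule R H)))
    (hsurj : Function.Surjective π)
    (H' : Submodule R H) (hcompl : IsCompl H' (Submodule.span R {v})) :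
    minGen H' = minGen (⊤ : Submodule R H) - 1 := by
  classical
  haveI : IsNoetherian R H := inferInstance
  -- scalars transfer
  have hRK : ∀ (X : Set W) (y : W), y ∈ Submodule.span R X → y ∈ Submodule.span K X := by
    intro X y hy
    induction hy using Submodule.span_induction with
    | mem _ h => exact Submodule.subset_span h
    | zero => exact Submodule.zero_mem _
    | add a b _ _ iha ihb => exact Submodule.add_mem _ iha ihb
    | smul r a _ ih =>
      rw [← hsmul]
      exact Submodule.smul_mem _ _ ih
  have hmk : ∀ (r : R) (h : H), σ r • π h = π (r • h) := fun r h => by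
    rw [hsmul, map_smul]
  -- image of a submodule is a subspace
  have himg : ∀ N : Submodule R H,
      ((Submodule.span K (π '' (N : Set H)) : Submodule K W) : Set W) = π '' (N : Set H) := by
    intro N
    refine Set.Subset.antisymm ?_ Submodule.subset_span
    intro w hw
    induction hw using Submodule.span_induction with
    | mem _ h => exact h
    | zero => exact ⟨0, N.zero_mem, map_zero π⟩
    | add a b _ _ iha ihb =>
      obtain ⟨xa, hxa, rfl⟩ := iha
      obtain ⟨xb, hxb, rfl⟩ := ihb
      exact ⟨xa + xb, N.add_mem hxa hxb, map_add π xa xb⟩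
    | smul c a _ ih =>
      obtain ⟨xa, hxa, rfl⟩ := ih
      obtain ⟨r, rfl⟩ := hσ c
      exact ⟨r • xa, N.smul_mem r hxa, (hmk r xa).symm⟩
  -- finite dimensionality
  obtain ⟨t, ht⟩ : (⊤ : Submodule R H).FG := Module.finite_def.mp ‹Module.Finite R H›
  haveI : Module.Finite K W := by
    rw [Module.finite_def]
    refine ⟨t.image π, ?_⟩
    have h1 : Submodule.span R (π '' (t : Set H)) = ⊤ := by
      rw [Submodule.span_image, ht, Submodule.map_top, LinearMap.range_eq_top.2 hsurj]
    rw [eq_top_iff]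
    intro w _
    refine hRK _ _ ?_
    rw [Finset.coe_image, h1]
    trivial
  -- lower bound for minGen
  have gen_ge : ∀ N : Submodule R H,
      Module.finrank K (Submodule.span K (π '' (N : Set H))) ≤ minGen N := by
    intro N
    have hne : {n | ∃ s : Finset H, s.card = n ∧ Submodule.span R (s : Set H) = N}.Nonempty := by
      obtain ⟨S, hS⟩ : N.FG := IsNoetherian.noetherian N
      exact ⟨S.card, S, rfl, hS⟩
    obtain ⟨S, hScard, hSspan⟩ := Nat.sInf_mem hne
    have hsub : Submodule.span K (π '' (N : Set H))
        ≤ Submodule.span K ((S.image π : Finset W) : Set W) := by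
      rw [Finset.coe_image]
      refine Submodule.span_le.2 ?_
      rintro w ⟨h, hh, rfl⟩
      refine hRK _ _ ?_
      rw [Submodule.span_image, hSspan]
      exact Submodule.mem_map_of_mem hh
    calc Module.finrank K (Submodule.span K (π '' (N : Set H)))
        ≤ Module.finrank K (Submodule.span K ((S.image π : Finset W) : Set W)) :=
          Submodule.finrank_mono hsub
      _ ≤ (S.image π).card := finrank_span_finset_le_card _
      _ ≤ S.card := Finset.card_image_le
      _ = minGen N := hScard
  -- upper bound for minGen
  have gen_le : ∀ N : Submodule R H, (N ⊓ ((Ideal.span {p} : Ideal R) • ⊤ : Submodule R H)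
        ≤ (Ideal.span {p} : Ideal R) • N) →
      minGen N ≤ Module.finrank K (Submodule.span K (π '' (N : Set H))) := by
    intro N hint
    let b : Basis (Fin (Module.finrank K (Submodule.span K (π '' (N : Set H))))) K
      (Submodule.span K (π '' (N : Set H))) := Module.finBasis K _
    have hb : ∀ i, ((b i : W) ∈ π '' (N : Set H)) := fun i => by
      have h2 : (b i : W) ∈ Submodule.span K (π '' (N : Set H)) := (b i).2
      rw [← SetLike.mem_coe, himg N] at h2
      exact h2
    choose x hxN hxπ using hb
    have hScoe : ((Finset.image x Finset.univ : Finset H) : Set H) = Set.range x := by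
      rw [Finset.coe_image, Finset.coe_univ, Set.image_univ]
    have hS1 : Submodule.span R ((Finset.image x Finset.univ : Finset H) : Set H) ≤ N := by
      rw [hScoe]
      exact Submodule.span_le.2 (by rintro _ ⟨i, rfl⟩; exact hxN i)
    have hS2 : N ≤ Submodule.span R ((Finset.image x Finset.univ : Finset H) : Set H)
        ⊔ (Ideal.span {p} : Ideal R) • N := by
      intro h hh
      have hπh : (⟨π h, Submodule.subset_span ⟨h, hh, rfl⟩⟩ :
          Submodule.span K (π '' (N : Set H))) ∈ Submodule.span K (Set.range b) := by
        rw [b.span_eq]; trivial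
      have hπh2 : π h ∈ Submodule.span K (Set.range (fun i => (b i : W))) := by
        have := Submodule.mem_map_of_mem (f := (Submodule.span K (π '' (N : Set H))).subtype) hπh
        rwa [Submodule.map_span, ← Set.range_comp] at this
      rw [mem_span_range_iff_exists_fun] at hπh2
      obtain ⟨c, hc⟩ := hπh2
      choose r hr using fun i => hσ (c i)
      have hker2 : h - ∑ i, r i • x i ∈ N ⊓ ((Ideal.span {p} : Ideal R) • ⊤ : Submodule R H) := by
        constructor
        · exact N.sub_mem hh (Submodule.sum_mem _ fun i _ => N.smul_mem _ (hxN i))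
        · have hz : π (h - ∑ i, r i • x i) = 0 := by
            rw [map_sub, map_sum]
            have he : ∀ i, π (r i • x i) = c i • (b i : W) := fun i => by
              rw [← hmk (r i) (x i), hr i, hxπ i]
            rw [Finset.sum_congr rfl (fun i _ => he i), hc, sub_self]
          exact (hker _).mp hz
      have hI := hint hker2
      have hsum : ∑ i, r i • x i ∈
          Submodule.span R ((Finset.image x Finset.univ : Finset H) : Set H) := by
        refine Submodule.sum_mem _ fun i _ => Submodule.smul_mem _ _ ?_
        refine Submodule.subset_span ?_
        rw [hScoe]; exact ⟨i, rfl⟩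
      have hsplit : h = (∑ i, r i • x i) + (h - ∑ i, r i • x i) := by abel
      rw [hsplit]
      exact Submodule.add_mem_sup hsum hI
    have hspan := aux_nakayama p m hann N _ hS1 hS2
    have h1 : minGen N ≤ (Finset.image x Finset.univ).card := Nat.sInf_le ⟨_, rfl, hspan⟩
    refine h1.trans ?_
    calc (Finset.image x Finset.univ).card ≤ Finset.univ.card := Finset.card_image_le
      _ = Module.finrank K (Submodule.span K (π '' (N : Set H))) := by simp
  -- compute minGen ⊤
  have htop : Submodule.span K (π '' ((⊤ : Submodule R H) : Set H)) = ⊤ := by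
    rw [Submodule.top_coe, Set.image_univ, eq_top_iff]
    intro w _
    obtain ⟨xw, rfl⟩ := hsurj w
    exact Submodule.subset_span ⟨xw, rfl⟩
  have hminTop : minGen (⊤ : Submodule R H) = Module.finrank K W := by
    refine le_antisymm ?_ ?_
    · have := gen_le ⊤ (by simp)
      rwa [htop, finrank_top] at this
    · have := gen_ge ⊤
      rwa [htop, finrank_top] at this
  -- H' ⊓ pH ≤ pH'
  have hintH' : H' ⊓ ((Ideal.span {p} : Ideal R) • ⊤ : Submodule R H)
      ≤ (Ideal.span {p} : Ideal R) • H' := by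
    rintro xx ⟨hx1, hx2⟩
    rw [Submodule.ideal_span_singleton_smul] at hx2 ⊢
    obtain ⟨w, -, rfl⟩ := aux_mem_psmul hx2
    have hw : w ∈ H' ⊔ Submodule.span R {v} := by rw [hcompl.sup_eq_top]; trivial
    obtain ⟨y, hy, z, hz, rfl⟩ := Submodule.mem_sup.1 hw
    obtain ⟨r, rfl⟩ := Submodule.mem_span_singleton.1 hz
    have hz2 : p • (r • v) ∈ H' ⊓ Submodule.span R {v} := by
      constructor
      · have hrw : p • (r • v) = p • (y + r • v) - p • y := by rw [smul_add]; abel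
        rw [hrw]
        exact H'.sub_mem hx1 (H'.smul_mem p hy)
      · exact Submodule.smul_mem _ _ (Submodule.smul_mem _ _ (Submodule.mem_span_singleton_self v))
    have hz0 : p • (r • v) = 0 := by
      have := hcompl.inf_eq_bot ▸ hz2
      simpa using this
    have hrw2 : p • (y + r • v) = p • y := by rw [smul_add, hz0, add_zero]
    rw [hrw2]
    exact Submodule.smul_mem_pointwise_smul y p H' hy
  -- v is not in H' + pH
  have hpm : p ^ m • v = 0 := hann v
  have hnodiv : ∀ h' ∈ H', ∀ w : H, v ≠ h' + p • w := by
    intro h' hh' w heq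
    have hw : w ∈ H' ⊔ Submodule.span R {v} := by rw [hcompl.sup_eq_top]; trivial
    obtain ⟨y, hy, z, hz, hwe⟩ := Submodule.mem_sup.1 hw
    obtain ⟨r, rfl⟩ := Submodule.mem_span_singleton.1 hz
    have h1 : (1 - p * r) • v ∈ H' := by
      have hstep : v = h' + p • y + (p * r) • v := by
        calc v = h' + p • w := heq
          _ = h' + p • (y + r • v) := by rw [← hwe]
          _ = h' + p • y + (p * r) • v := by rw [smul_add, smul_smul]; abel
      have hcalc : (1 - p * r) • v = (h' + p • y) := by
        rw [sub_smul, one_smul]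
        exact (eq_sub_of_add_eq hstep.symm).symm
      rw [hcalc]
      exact H'.add_mem hh' (H'.smul_mem p hy)
    have h2 : (1 - p * r) • v ∈ Submodule.span R {v} :=
      Submodule.smul_mem _ _ (Submodule.mem_span_singleton_self v)
    have h0 : (1 - p * r) • v = 0 := by
      have := hcompl.inf_eq_bot ▸ (Submodule.mem_inf.2 ⟨h1, h2⟩)
      simpa using this
    have hveq : v = (p * r) • v := by
      rwa [sub_smul, one_smul, sub_eq_zero] at h0
    apply hpv
    have hpp : p ^ (m - 1) * p = p ^ m := by
      rw [← pow_succ]; congr 1; omega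
    calc p ^ (m - 1) • v = p ^ (m - 1) • (p * r) • v := by rw [← hveq]
      _ = (r * (p ^ (m - 1) * p)) • v := by rw [smul_smul]; congr 1; ring
      _ = r • p ^ m • v := by rw [hpp, mul_smul]
      _ = 0 := by rw [hpm, smul_zero]
  have hπvA : π v ∉ Submodule.span K (π '' (H' : Set H)) := by
    intro hmem
    rw [← SetLike.mem_coe, himg H'] at hmem
    obtain ⟨h', hh', hπv⟩ := hmem
    have hker3 : v - h' ∈ ((Ideal.span {p} : Ideal R) • ⊤ : Submodule R H) := by
      refine (hker _).mp ?_
      rw [map_sub, hπv, sub_self]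
    rw [Submodule.ideal_span_singleton_smul] at hker3
    obtain ⟨w, -, hwe⟩ := aux_mem_psmul hker3
    exact hnodiv h' hh' w (by rw [hwe]; abel)
  have hπv_ne : π v ≠ 0 := fun h0 => hπvA (h0 ▸ Submodule.zero_mem _)
  have hdisj : Disjoint (Submodule.span K (π '' (H' : Set H))) (Submodule.span K {π v}) :=
    (Submodule.disjoint_span_singleton).2 (fun hmem => absurd hmem hπvA)
  have hsupAB : Submodule.span K (π '' (H' : Set H)) ⊔ Submodule.span K {π v} = ⊤ := by
    rw [eq_top_iff]
    intro w _
    obtain ⟨xw, rfl⟩ := hsurj w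
    have hx : xw ∈ H' ⊔ Submodule.span R {v} := by rw [hcompl.sup_eq_top]; trivial
    obtain ⟨y, hy, z, hz, rfl⟩ := Submodule.mem_sup.1 hx
    obtain ⟨r, rfl⟩ := Submodule.mem_span_singleton.1 hz
    have hπadd : π (y + r • v) = π y + σ r • π v := by
      rw [map_add, hmk]
    rw [hπadd]
    exact Submodule.add_mem_sup (Submodule.subset_span ⟨y, hy, rfl⟩)
      (Submodule.smul_mem _ _ (Submodule.subset_span rfl))
  have hfr : Module.finrank K W = Module.finrank K (Submodule.span K (π '' (H' : Set H))) + 1 := by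
    have hadd := Submodule.finrank_sup_add_finrank_inf_eq
      (Submodule.span K (π '' (H' : Set H))) (Submodule.span K {π v})
    rw [hsupAB, disjoint_iff.mp hdisj, finrank_top, finrank_bot,
      finrank_span_singleton hπv_ne] at hadd
    omega
  have hH'val : minGen H' = Module.finrank K (Submodule.span K (π '' (H' : Set H))) :=
    le_antisymm (gen_le H' hintH') (gen_ge H')
  rw [hH'val, hminTop, hfr]
  omega

/-- Splitting off a cyclic summand of maximal length: if `H` is a finitely
generated `p`-primary module over a PID `R` and `l(v) = l(H)`, then
`H = H' ⊕ R·v` with `R·v ≅ R/p^{l(v)}` and `s(H') = s(H) - 1`. -/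
theorem split_off_max_cyclic_summand
    {R : Type*} [CommRing R] [IsDomain R] [IsPrincipalIdealRing R]
    {H : Type*} [AddCommGroup H] [Module R H] [Module.Finite R H] [Nontrivial H]
    (p : R) (hp : Irreducible p)
    (hprim : ∀ x : H, ∃ k : ℕ, p ^ k • x = 0)
    (v : H) (hv : ∀ h : H, pLen p h ≤ pLen p v) :
    ∃ H' : Submodule R H,
      IsCompl H' (Submodule.span R {v}) ∧
      Nonempty ((Submodule.span R {v} : Submodule R H) ≃ₗ[R]
        (R ⧸ (Ideal.span {p ^ pLen p v} : Ideal R))) ∧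
      minGen H' = minGen (⊤ : Submodule R H) - 1 := by
  classical
  have hspec : ∀ x : H, p ^ pLen p x • x = 0 := fun x => Nat.sInf_mem (hprim x)
  have hann : ∀ x : H, p ^ pLen p v • x = 0 := by
    intro x
    calc p ^ pLen p v • x = p ^ (pLen p v - pLen p x) • p ^ pLen p x • x := by
          rw [← mul_smul, ← pow_add, Nat.sub_add_cancel (hv x)]
      _ = 0 := by rw [hspec, smul_zero]
  have hM : Module.IsTorsion' H (Submonoid.powers p) := fun x => by
    obtain ⟨k, hk⟩ := hprim x; exact ⟨⟨p ^ k, k, rfl⟩, hk⟩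
  have hlpos : 0 < pLen p v := by
    obtain ⟨h, hh⟩ := exists_ne (0 : H)
    have hne : pLen p h ≠ 0 := by
      intro h0
      apply hh
      have := hspec h
      rwa [h0, pow_zero, one_smul] at this
    exact lt_of_lt_of_le (Nat.pos_of_ne_zero hne) (hv h)
  have hpow_ne : p ^ (pLen p v - 1) • v ≠ 0 := by
    intro hz
    have : pLen p v ≤ pLen p v - 1 := Nat.sInf_le hz
    omega
  -- the complement
  obtain ⟨s, hs⟩ := aux_section p hp hM v hann
  have hsq : ∀ q, (Submodule.span R {v}).mkQ (s q) = q := fun q => DFunLike.congr_fun hs q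
  have hmkzero : ∀ x : H, (Submodule.span R {v}).mkQ x = 0 ↔ x ∈ Submodule.span R {v} :=
    fun x => Submodule.Quotient.mk_eq_zero _
  have hcompl : IsCompl (LinearMap.range s) (Submodule.span R {v}) := by
    constructor
    · rw [disjoint_iff, eq_bot_iff]
      rintro x ⟨hx1, hx2⟩
      obtain ⟨q, rfl⟩ := hx1
      have hq0 : q = 0 := by rw [← hsq q, (hmkzero _).2 hx2]
      rw [hq0, map_zero]
      exact Submodule.zero_mem ⊥
    · rw [codisjoint_iff, eq_top_iff]
      intro x _
      have hmem : x - s ((Submodule.span R {v}).mkQ x) ∈ Submodule.span R {v} := by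
        rw [← hmkzero, map_sub, hsq, sub_self]
      exact Submodule.mem_sup.2 ⟨s ((Submodule.span R {v}).mkQ x), ⟨_, rfl⟩,
        x - s ((Submodule.span R {v}).mkQ x), hmem, by abel⟩
  -- the cyclic equivalence
  have hord : Submodule.pOrder hM v = pLen p v :=
    le_antisymm (Nat.find_le (hann v)) (Nat.sInf_le (Submodule.pow_pOrder_smul hM v))
  have heq : Ideal.torsionOf R H v = Ideal.span {p ^ pLen p v} := by
    rw [Ideal.torsionOf_eq_span_pow_pOrder hp hM v, hord]
  refine ⟨LinearMap.range s, hcompl, ⟨(Ideal.quotTorsionOfEquivSpanSingleton R H v).symm.trans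
    (Submodule.quotEquivOfEq _ _ heq)⟩, ?_⟩
  -- counting generators via aux_count
  haveI : (Ideal.span {p} : Ideal R).IsMaximal := PrincipalIdealRing.isMaximal_of_irreducible hp
  letI : Field (R ⧸ (Ideal.span {p} : Ideal R)) := Ideal.Quotient.field _
  refine aux_count (W := H ⧸ ((Ideal.span {p} : Ideal R) • ⊤ : Submodule R H))
    (Ideal.Quotient.mk (Ideal.span {p})) Ideal.Quotient.mk_surjective
    ?_ p (pLen p v) hlpos hann v hpow_ne
    ((Ideal.span {p} : Ideal R) • ⊤ : Submodule R H).mkQ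
    (fun x => Submodule.Quotient.mk_eq_zero _)
    (Submodule.Quotient.mk_surjective _) _ hcompl
  intro r w
  obtain ⟨x, rfl⟩ := Submodule.Quotient.mk_surjective _ w
  rw [Module.Quotient.mk_smul_mk, ← Submodule.Quotient.mk_smul]
end
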